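/- arXiv:2506.05353 — 2 statements merged into one kernel-verified Lean document; each statement's English description precedes it below -/
import Mathlib

section
/- The Lie-Yamaguti algebra structure 𝓛₄₄⁰ on ℂ⁴, given by [e₁,e₂]=e₃+e₄, [e₂,e₃]=e₄, [e₁,e₂,e₁]=e₃, [e₁,e₂,e₃]=−e₄, [e₁,e₃,e₂]=−e₄, degenerates to the structure 𝓛₀₁ given by [e₁,e₂]=e₃ with zero trilinear operation. -/
open Filter Matrix Topology

/-- ℂ⁴ -/
abbrev V4 : Type := Fin 4 → ℂ

/-- GL₄(ℂ) -/
abbrev GL4 := Matrix.GeneralLinearGroup (Fin 4) ℂ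

/-- structure constants of a bilinear map on ℂ⁴: `μ i j` is the value on `(eᵢ, eⱼ)`. -/
abbrev Bil4 := Fin 4 → Fin 4 → V4

/-- structure constants of a trilinear map on ℂ⁴. -/
abbrev Tril4 := Fin 4 → Fin 4 → Fin 4 → V4

/-- standard basis vectors -/
noncomputable def e4 (k : Fin 4) : V4 := Pi.single k (1 : ℂ)

/-- action of `g ∈ GL₄(ℂ)` on a bilinear map: `(g·μ)(x,y) = g μ(g⁻¹x, g⁻¹y)`,
in structure constants. -/
noncomputable def actBil (g : GL4) (μ : Bil4) : Bil4 := fun i j =>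
  (g : Matrix (Fin 4) (Fin 4) ℂ).mulVec
    (∑ p, ∑ q,
      (((g⁻¹ : GL4) : Matrix (Fin 4) (Fin 4) ℂ) p i *
       ((g⁻¹ : GL4) : Matrix (Fin 4) (Fin 4) ℂ) q j) • μ p q)

/-- action of `g ∈ GL₄(ℂ)` on a trilinear map:
`(g·τ)(x,y,z) = g τ(g⁻¹x, g⁻¹y, g⁻¹z)`, in structure constants. -/
noncomputable def actTril (g : GL4) (τ : Tril4) : Tril4 := fun i j k =>
  (g : Matrix (Fin 4) (Fin 4) ℂ).mulVec
    (∑ p, ∑ q, ∑ r,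
      (((g⁻¹ : GL4) : Matrix (Fin 4) (Fin 4) ℂ) p i *
       ((g⁻¹ : GL4) : Matrix (Fin 4) (Fin 4) ℂ) q j *
       ((g⁻¹ : GL4) : Matrix (Fin 4) (Fin 4) ℂ) r k) • τ p q r)

/-- `(μ,τ)` degenerates to `(lam,sig)`: there is a curve `g : ℂ∖{0} → GL₄(ℂ)` with
`g(t)·μ → lam` and `g(t)·τ → sig` as `t → 0`. -/
def Degenerates (μ : Bil4) (τ : Tril4) (lam : Bil4) (sig : Tril4) : Prop :=
  ∃ g : ℂ → GL4,
    Tendsto (fun t => actBil (g t) μ) (𝓝[≠] (0 : ℂ)) (𝓝 lam) ∧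
    Tendsto (fun t => actTril (g t) τ) (𝓝[≠] (0 : ℂ)) (𝓝 sig)

noncomputable def μL44_0 : Bil4 := fun i j =>
  if i = (0 : Fin 4) ∧ j = (1 : Fin 4) then e4 2 + e4 3
  else if i = (1 : Fin 4) ∧ j = (0 : Fin 4) then -(e4 2 + e4 3)
  else if i = (1 : Fin 4) ∧ j = (2 : Fin 4) then e4 3
  else if i = (2 : Fin 4) ∧ j = (1 : Fin 4) then -(e4 3)
  else 0

noncomputable def τL44_0 : Tril4 := fun i j k =>
  if i = (0 : Fin 4) ∧ j = (1 : Fin 4) ∧ k = (0 : Fin 4) then e4 2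
  else if i = (1 : Fin 4) ∧ j = (0 : Fin 4) ∧ k = (0 : Fin 4) then -(e4 2)
  else if i = (0 : Fin 4) ∧ j = (1 : Fin 4) ∧ k = (2 : Fin 4) then -(e4 3)
  else if i = (1 : Fin 4) ∧ j = (0 : Fin 4) ∧ k = (2 : Fin 4) then -(-(e4 3))
  else if i = (0 : Fin 4) ∧ j = (2 : Fin 4) ∧ k = (1 : Fin 4) then -(e4 3)
  else if i = (2 : Fin 4) ∧ j = (0 : Fin 4) ∧ k = (1 : Fin 4) then -(-(e4 3))
  else 0

noncomputable def μL01 : Bil4 := fun i j =>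
  if i = (0 : Fin 4) ∧ j = (1 : Fin 4) then e4 2
  else if i = (1 : Fin 4) ∧ j = (0 : Fin 4) then -(e4 2)
  else 0

noncomputable def zeroTril : Tril4 := fun _ _ _ => 0


noncomputable def dv (t : ℂ) : Fin 4 → ℂ := ![t⁻¹, t, 1, t^2]
noncomputable def dvi (t : ℂ) : Fin 4 → ℂ := ![t, t⁻¹, 1, (t^2)⁻¹]

lemma dv_mul_dvi (t : ℂ) (ht : t ≠ 0) : dv t * dvi t = 1 := by
  funext k; fin_cases k <;> simp [dv, dvi] <;> field_simp

lemma dvi_mul_dv (t : ℂ) (ht : t ≠ 0) : dvi t * dv t = 1 := by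
  rw [mul_comm]; exact dv_mul_dvi t ht

noncomputable def gcur (t : ℂ) : GL4 :=
  if h : t = 0 then 1 else
    ⟨Matrix.diagonal (dv t), Matrix.diagonal (dvi t), by
      rw [Matrix.diagonal_mul_diagonal]
      rw [show (fun i => dv t i * dvi t i) = (1 : Fin 4 → ℂ) from dv_mul_dvi t h]
      exact Matrix.diagonal_one, by
      rw [Matrix.diagonal_mul_diagonal]
      rw [show (fun i => dvi t i * dv t i) = (1 : Fin 4 → ℂ) from dvi_mul_dv t h]
      exact Matrix.diagonal_one⟩

lemma gcur_coe (t : ℂ) (ht : t ≠ 0) :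
    ((gcur t : GL4) : Matrix (Fin 4) (Fin 4) ℂ) = Matrix.diagonal (dv t) := by
  simp [gcur, ht]

lemma gcur_inv_coe (t : ℂ) (ht : t ≠ 0) :
    (((gcur t)⁻¹ : GL4) : Matrix (Fin 4) (Fin 4) ℂ) = Matrix.diagonal (dvi t) := by
  simp [gcur, ht]

lemma actBil_gcur (t : ℂ) (ht : t ≠ 0) (μ : Bil4) (i j k : Fin 4) :
    actBil (gcur t) μ i j k = dv t k * (dvi t i * dvi t j * μ i j k) := by
  unfold actBil
  rw [gcur_coe t ht, gcur_inv_coe t ht]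
  have h : (∑ p, ∑ q,
      (Matrix.diagonal (dvi t) p i * Matrix.diagonal (dvi t) q j) • μ p q)
      = (dvi t i * dvi t j) • μ i j := by
    simp [Matrix.diagonal_apply, ite_smul, Finset.sum_ite_eq', mul_ite, ite_mul]
  rw [h, Matrix.mulVec_diagonal]
  simp [mul_assoc]

lemma actTril_gcur (t : ℂ) (ht : t ≠ 0) (τ : Tril4) (i j k l : Fin 4) :
    actTril (gcur t) τ i j k l = dv t l * (dvi t i * dvi t j * dvi t k * τ i j k l) := by
  unfold actTril
  rw [gcur_coe t ht, gcur_inv_coe t ht]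
  have h : (∑ p, ∑ q, ∑ r,
      (Matrix.diagonal (dvi t) p i * Matrix.diagonal (dvi t) q j *
        Matrix.diagonal (dvi t) r k) • τ p q r)
      = (dvi t i * dvi t j * dvi t k) • τ i j k := by
    simp [Matrix.diagonal_apply, ite_smul, Finset.sum_ite_eq', mul_ite, ite_mul]
  rw [h, Matrix.mulVec_diagonal]
  simp [mul_assoc]

noncomputable def Abil : Bil4 := fun i j =>
  if i = (1 : Fin 4) ∧ j = (2 : Fin 4) then e4 3
  else if i = (2 : Fin 4) ∧ j = (1 : Fin 4) then -(e4 3)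
  else 0

noncomputable def Bbil : Bil4 := fun i j =>
  if i = (0 : Fin 4) ∧ j = (1 : Fin 4) then e4 3
  else if i = (1 : Fin 4) ∧ j = (0 : Fin 4) then -(e4 3)
  else 0

noncomputable def Ctr : Tril4 := fun i j k =>
  if i = (0 : Fin 4) ∧ j = (1 : Fin 4) ∧ k = (0 : Fin 4) then e4 2
  else if i = (1 : Fin 4) ∧ j = (0 : Fin 4) ∧ k = (0 : Fin 4) then -(e4 2)
  else 0

noncomputable def Dtr : Tril4 := fun i j k =>
  if i = (0 : Fin 4) ∧ j = (1 : Fin 4) ∧ k = (2 : Fin 4) then -(e4 3)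
  else if i = (1 : Fin 4) ∧ j = (0 : Fin 4) ∧ k = (2 : Fin 4) then e4 3
  else if i = (0 : Fin 4) ∧ j = (2 : Fin 4) ∧ k = (1 : Fin 4) then -(e4 3)
  else if i = (2 : Fin 4) ∧ j = (0 : Fin 4) ∧ k = (1 : Fin 4) then e4 3
  else 0

lemma key_bil (t : ℂ) (ht : t ≠ 0) :
    actBil (gcur t) μL44_0
      = fun i j k => μL01 i j k + t * Abil i j k + t^2 * Bbil i j k := by
  funext i j k
  rw [actBil_gcur t ht]
  fin_cases i <;> fin_cases j <;> fin_cases k <;>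
    simp [μL44_0, μL01, Abil, Bbil, dv, dvi, e4, Pi.single_apply] <;>
    field_simp <;> ring

lemma actTril_gcur' (t : ℂ) (ht : t ≠ 0) (τ : Tril4) (i j k : Fin 4) :
    actTril (gcur t) τ i j k
      = fun l => dv t l * (dvi t i * dvi t j * dvi t k * τ i j k l) :=
  funext fun l => actTril_gcur t ht τ i j k l

set_option maxHeartbeats 1600000 in
lemma key_tril (t : ℂ) (ht : t ≠ 0) :
    actTril (gcur t) τL44_0
      = fun i j k l => t * Ctr i j k l + t^2 * Dtr i j k l := by
  funext i j k
  rw [actTril_gcur' t ht]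
  fin_cases i <;> fin_cases j <;> fin_cases k <;>
    simp only [τL44_0, Ctr, Dtr] <;>
    norm_num <;>
    (funext l; fin_cases l <;>
      simp [dv, dvi, e4, Pi.single_apply] <;> field_simp <;> ring)


/-- 𝓛₄₄⁰ degenerates to 𝓛₀₁. -/
theorem stmt0 : Degenerates μL44_0 τL44_0 μL01 zeroTril := by
  refine ⟨gcur, ?_, ?_⟩
  · have c : Continuous (fun t : ℂ =>
        (fun i j k => μL01 i j k + t * Abil i j k + t^2 * Bbil i j k : Bil4)) := by
      apply continuous_pi; intro i; apply continuous_pi; intro j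
      apply continuous_pi; intro k; fun_prop
    have h0 : (fun i j k => μL01 i j k + (0:ℂ) * Abil i j k + (0:ℂ)^2 * Bbil i j k : Bil4)
        = μL01 := by
      funext i j k; simp
    have ht : Tendsto (fun t : ℂ =>
        (fun i j k => μL01 i j k + t * Abil i j k + t^2 * Bbil i j k : Bil4))
        (𝓝[≠] (0:ℂ)) (𝓝 μL01) := by
      have := (c.tendsto 0).mono_left (nhdsWithin_le_nhds (s := {(0:ℂ)}ᶜ))
      rwa [h0] at this
    refine ht.congr' ?_
    filter_upwards [self_mem_nhdsWithin] with t htne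
    exact (key_bil t htne).symm
  · have c : Continuous (fun t : ℂ =>
        (fun i j k l => t * Ctr i j k l + t^2 * Dtr i j k l : Tril4)) := by
      apply continuous_pi; intro i; apply continuous_pi; intro j
      apply continuous_pi; intro k; apply continuous_pi; intro l; fun_prop
    have h0 : (fun i j k l => (0:ℂ) * Ctr i j k l + (0:ℂ)^2 * Dtr i j k l : Tril4)
        = zeroTril := by
      funext i j k l; simp [zeroTril]
    have ht : Tendsto (fun t : ℂ =>
        (fun i j k l => t * Ctr i j k l + t^2 * Dtr i j k l : Tril4))
        (𝓝[≠] (0:ℂ)) (𝓝 zeroTril) := by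
      have := (c.tendsto 0).mono_left (nhdsWithin_le_nhds (s := {(0:ℂ)}ᶜ))
      rwa [h0] at this
    refine ht.congr' ?_
    filter_upwards [self_mem_nhdsWithin] with t htne
    exact (key_tril t htne).symm
end

section
/- The Lie-Yamaguti algebra structure 𝓛₄₄⁰ on ℂ⁴, given by [e₁,e₂]=e₃+e₄, [e₂,e₃]=e₄, [e₁,e₂,e₁]=e₃, [e₁,e₂,e₃]=−e₄, [e₁,e₃,e₂]=−e₄, degenerates to the structure 𝓛₅₀ with zero binary product and trilinear products [e₁,e₂,e₁]=e₃, [e₁,e₂,e₂]=e₄. -/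
open Filter Matrix Topology

noncomputable def zeroBil : Bil4 := fun _ _ => 0

noncomputable def τL50 : Tril4 := fun i j k =>
  if i = (0 : Fin 4) ∧ j = (1 : Fin 4) ∧ k = (0 : Fin 4) then e4 2
  else if i = (1 : Fin 4) ∧ j = (0 : Fin 4) ∧ k = (0 : Fin 4) then -(e4 2)
  else if i = (0 : Fin 4) ∧ j = (1 : Fin 4) ∧ k = (1 : Fin 4) then e4 3
  else if i = (1 : Fin 4) ∧ j = (0 : Fin 4) ∧ k = (1 : Fin 4) then -(e4 3)
  else 0


noncomputable def Gm (t : ℂ) : Matrix (Fin 4) (Fin 4) ℂ :=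
  !![t, 0, 0, 0; 0, t⁻¹ * t⁻¹, 0, 0; 0, t⁻¹ * t⁻¹ * t⁻¹ / 2, 1, 0; 0, 0, 0, 1]

noncomputable def Hm (t : ℂ) : Matrix (Fin 4) (Fin 4) ℂ :=
  !![t⁻¹, 0, 0, 0; 0, t * t, 0, 0; 0, -(t⁻¹) / 2, 1, 0; 0, 0, 0, 1]

lemma GH (t : ℂ) (ht : t ≠ 0) : Gm t * Hm t = 1 := by
  ext i j
  fin_cases i <;> fin_cases j <;>
    simp [Gm, Hm, Matrix.mul_apply, Fin.sum_univ_four, Matrix.one_apply,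
      Matrix.vecHead, Matrix.vecTail] <;> field_simp <;> ring

lemma HG (t : ℂ) (ht : t ≠ 0) : Hm t * Gm t = 1 := by
  ext i j
  fin_cases i <;> fin_cases j <;>
    simp [Gm, Hm, Matrix.mul_apply, Fin.sum_univ_four, Matrix.one_apply,
      Matrix.vecHead, Matrix.vecTail] <;> field_simp <;> ring

noncomputable def gmap (t : ℂ) : GL4 :=
  if h : t = 0 then 1 else ⟨Gm t, Hm t, GH t h, HG t h⟩

lemma gmap_coe (t : ℂ) (ht : t ≠ 0) :
    ((gmap t : GL4) : Matrix (Fin 4) (Fin 4) ℂ) = Gm t := by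
  simp [gmap, ht]

lemma gmap_inv_coe (t : ℂ) (ht : t ≠ 0) :
    (((gmap t)⁻¹ : GL4) : Matrix (Fin 4) (Fin 4) ℂ) = Hm t := by
  simp [gmap, ht]

lemma mulGm (t a b : ℂ) : (Gm t).mulVec (a • e4 2 + b • e4 3) = a • e4 2 + b • e4 3 := by
  funext k
  fin_cases k <;>
    simp [Gm, e4, Matrix.mulVec, dotProduct, Fin.sum_univ_four,
      Matrix.vecHead, Matrix.vecTail, Pi.single_apply]

set_option maxHeartbeats 1000000 in
lemma sum_mu (t : ℂ) (i j : Fin 4) :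
    (∑ p, ∑ q, (Hm t p i * Hm t q j) • μL44_0 p q) =
      (Hm t 0 i * Hm t 1 j - Hm t 1 i * Hm t 0 j) • e4 2
      + ((Hm t 0 i * Hm t 1 j - Hm t 1 i * Hm t 0 j)
         + (Hm t 1 i * Hm t 2 j - Hm t 2 i * Hm t 1 j)) • e4 3 := by
  simp [Fin.sum_univ_four, μL44_0, smul_smul, sub_smul, add_smul, neg_smul, smul_add,
    mul_comm, mul_assoc, mul_left_comm]
  module

set_option maxHeartbeats 1000000 in
lemma sum_tau (t : ℂ) (i j k : Fin 4) :
    (∑ p, ∑ q, ∑ r, (Hm t p i * Hm t q j * Hm t r k) • τL44_0 p q r) =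
      ((Hm t 0 i * Hm t 1 j - Hm t 1 i * Hm t 0 j) * Hm t 0 k) • e4 2
      + (-((Hm t 0 i * Hm t 1 j - Hm t 1 i * Hm t 0 j) * Hm t 2 k)
         - (Hm t 0 i * Hm t 2 j - Hm t 2 i * Hm t 0 j) * Hm t 1 k) • e4 3 := by
  simp [Fin.sum_univ_four, τL44_0, smul_smul, sub_smul, add_smul, neg_smul,
    mul_comm, mul_assoc, mul_left_comm]
  module

noncomputable def Bfun (t : ℂ) : Bil4 := fun i j =>
  if i = (0 : Fin 4) ∧ j = (1 : Fin 4) then t • (e4 2 + e4 3)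
  else if i = (1 : Fin 4) ∧ j = (0 : Fin 4) then -(t • (e4 2 + e4 3))
  else if i = (1 : Fin 4) ∧ j = (2 : Fin 4) then (t * t) • e4 3
  else if i = (2 : Fin 4) ∧ j = (1 : Fin 4) then -((t * t) • e4 3)
  else 0

noncomputable def Tfun (t : ℂ) : Tril4 := fun i j k =>
  if i = (0 : Fin 4) ∧ j = (1 : Fin 4) ∧ k = (0 : Fin 4) then e4 2
  else if i = (1 : Fin 4) ∧ j = (0 : Fin 4) ∧ k = (0 : Fin 4) then -(e4 2)
  else if i = (0 : Fin 4) ∧ j = (1 : Fin 4) ∧ k = (1 : Fin 4) then e4 3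
  else if i = (1 : Fin 4) ∧ j = (0 : Fin 4) ∧ k = (1 : Fin 4) then -(e4 3)
  else if i = (0 : Fin 4) ∧ j = (1 : Fin 4) ∧ k = (2 : Fin 4) then -(t • e4 3)
  else if i = (1 : Fin 4) ∧ j = (0 : Fin 4) ∧ k = (2 : Fin 4) then t • e4 3
  else if i = (0 : Fin 4) ∧ j = (2 : Fin 4) ∧ k = (1 : Fin 4) then -(t • e4 3)
  else if i = (2 : Fin 4) ∧ j = (0 : Fin 4) ∧ k = (1 : Fin 4) then t • e4 3
  else 0

set_option maxHeartbeats 4000000 in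
lemma hB (t : ℂ) (ht : t ≠ 0) : actBil (gmap t) μL44_0 = Bfun t := by
  funext i j
  rw [actBil, gmap_coe t ht, gmap_inv_coe t ht, sum_mu, mulGm]
  fin_cases i <;> fin_cases j <;>
    simp [Hm, Bfun, Matrix.vecHead, Matrix.vecTail, -smul_eq_zero] <;>
    match_scalars <;> (try field_simp) <;> (try ring)

set_option maxHeartbeats 4000000 in
lemma hT (t : ℂ) (ht : t ≠ 0) : actTril (gmap t) τL44_0 = Tfun t := by
  funext i j k
  rw [actTril, gmap_coe t ht, gmap_inv_coe t ht, sum_tau, mulGm]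
  fin_cases i <;> fin_cases j <;> fin_cases k <;>
    simp [Hm, Tfun, Matrix.vecHead, Matrix.vecTail, -smul_eq_zero] <;>
    match_scalars <;> (try field_simp) <;> (try ring)

lemma key_smul (v : V4) : Tendsto (fun t : ℂ => t • v) (𝓝[≠] (0 : ℂ)) (𝓝 0) := by
  have h : Continuous fun t : ℂ => t • v := continuous_id.smul continuous_const
  simpa using (h.tendsto 0).mono_left nhdsWithin_le_nhds

lemma key_smul2 (v : V4) : Tendsto (fun t : ℂ => (t * t) • v) (𝓝[≠] (0 : ℂ)) (𝓝 0) := by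
  have h : Continuous fun t : ℂ => (t * t) • v :=
    (continuous_id.mul continuous_id).smul continuous_const
  simpa using (h.tendsto 0).mono_left nhdsWithin_le_nhds

set_option maxHeartbeats 1000000 in
lemma tendB : Tendsto Bfun (𝓝[≠] (0 : ℂ)) (𝓝 zeroBil) := by
  rw [tendsto_pi_nhds]
  intro i
  rw [tendsto_pi_nhds]
  intro j
  fin_cases i <;> fin_cases j <;>
    simp only [Bfun, zeroBil] <;> norm_num <;>
    first
      | exact tendsto_const_nhds
      | exact key_smul _
      | exact key_smul2 _
      | simpa [smul_add] using key_smul (e4 2 + e4 3)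
      | simpa [smul_add] using (key_smul (e4 2 + e4 3)).neg
      | simpa using (key_smul (e4 3)).neg
      | simpa using (key_smul2 (e4 3)).neg

set_option maxHeartbeats 1000000 in
lemma tendT : Tendsto Tfun (𝓝[≠] (0 : ℂ)) (𝓝 τL50) := by
  rw [tendsto_pi_nhds]
  intro i
  rw [tendsto_pi_nhds]
  intro j
  rw [tendsto_pi_nhds]
  intro k
  fin_cases i <;> fin_cases j <;> fin_cases k <;>
    simp only [Tfun, τL50] <;> norm_num <;>
    first
      | exact tendsto_const_nhds
      | exact key_smul _
      | exact key_smul2 _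
      | simpa [smul_add] using key_smul (e4 2 + e4 3)
      | simpa [smul_add] using (key_smul (e4 2 + e4 3)).neg
      | simpa using (key_smul (e4 3)).neg
      | simpa using (key_smul2 (e4 3)).neg

/-- 𝓛₄₄⁰ degenerates to 𝓛₅₀. -/
theorem stmt8 : Degenerates μL44_0 τL44_0 zeroBil τL50 := by
  refine ⟨gmap, ?_, ?_⟩
  · refine Tendsto.congr' ?_ tendB
    filter_upwards [self_mem_nhdsWithin] with t ht
    exact (hB t ht).symm
  · refine Tendsto.congr' ?_ tendT
    filter_upwards [self_mem_nhdsWithin] with t ht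
    exact (hT t ht).symm
end
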